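/- If a + M^d d + M^s s(d) < d componentwise (all firms default even under full debt payments), then the unique fixed point of Φ is ((I − M^d)^{-1} a, 0): the equity component of the solution is the zero vector and the debt component is (I − M^d)^{-1} a. -/

import Mathlib

open Matrix Finset Filter Topology

/-- A left substochastic matrix: nonnegative entries, column sums at most 1. -/
def Substoch {n : ℕ} (M : Matrix (Fin n) (Fin n) ℝ) : Prop :=
  (∀ i j, 0 ≤ M i j) ∧ ∀ j, ∑ i, M i j ≤ 1

/-- The Elsinger Property: no nonempty subset `J` of indices with all column
sums over `J` (for columns in `J`) equal to 1. -/
def Elsinger {n : ℕ} (M : Matrix (Fin n) (Fin n) ℝ) : Prop :=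
  ∀ J : Finset (Fin n), J.Nonempty → ¬ (∀ j ∈ J, ∑ i ∈ J, M i j = 1)

/-- The liquidation value map `Φ(r,s) = (min{d, a+M^d r+M^s s}, (a+M^d r+M^s s−d)⁺)`. -/
noncomputable def Phi {n : ℕ} (a d : Fin n → ℝ) (Md Ms : Matrix (Fin n) (Fin n) ℝ)
    (R : (Fin n → ℝ) × (Fin n → ℝ)) : (Fin n → ℝ) × (Fin n → ℝ) :=
  (fun i => min (d i) (a i + Md.mulVec R.1 i + Ms.mulVec R.2 i),
   fun i => max (a i + Md.mulVec R.1 i + Ms.mulVec R.2 i - d i) 0)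

/-- The lower bound `R_min = (min{d,a}, (a−d)⁺)`. -/
noncomputable def Rmin {n : ℕ} (a d : Fin n → ℝ) : (Fin n → ℝ) × (Fin n → ℝ) :=
  (fun i => min (d i) (a i), fun i => max (a i - d i) 0)

/-- The upper bound `R_max = (d, (I−M^s)⁻¹ (a + M^d d − d)⁺)`. -/
noncomputable def Rmax {n : ℕ} (a d : Fin n → ℝ)
    (Md Ms : Matrix (Fin n) (Fin n) ℝ) : (Fin n → ℝ) × (Fin n → ℝ) :=
  (d, (1 - Ms)⁻¹.mulVec fun i => max (a i + Md.mulVec d i - d i) 0)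

/-! A fixed point `(r, s)` of `Φ` has `r ≤ d`, so `a + M^d r ≤ a + M^d d ≤ d` and the equity
component satisfies `0 ≤ s ≤ M^s s`. For a substochastic matrix this forces equality, and then the
support of `s` would have all its column sums over itself equal to `1`, which the Elsinger Property
excludes; hence `s = 0` and `r = a + M^d r`. The same argument applied to the negative part of `y`
shows that `M y ≤ y` implies `0 ≤ y`, which makes `I - M^d` invertible and shows that its solution
`(I - M^d)⁻¹ a` stays below `d`. -/

theorem Matrix.mulVec_mono_of_nonneg {m n R : Type*} [Fintype n] [Semiring R] [PartialOrder R]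
    [IsOrderedRing R] {M : Matrix m n R} (hM : ∀ i j, 0 ≤ M i j) {v w : n → R} (h : v ≤ w) :
    M *ᵥ v ≤ M *ᵥ w :=
  fun i => Finset.sum_le_sum fun j _ => mul_le_mul_of_nonneg_left (h j) (hM i j)

theorem Matrix.mulVec_nonneg_of_nonneg {m n R : Type*} [Fintype n] [Semiring R] [PartialOrder R]
    [IsOrderedRing R] {M : Matrix m n R} (hM : ∀ i j, 0 ≤ M i j) {v : n → R} (hv : 0 ≤ v) :
    0 ≤ M *ᵥ v := by
  simpa only [mulVec_zero] using mulVec_mono_of_nonneg hM hv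

variable {n : ℕ} {M : Matrix (Fin n) (Fin n) ℝ}

theorem Elsinger.eq_zero_of_mulVec_eq (hME : Elsinger M) (hM : ∀ i j, 0 ≤ M i j)
    {v : Fin n → ℝ} (hv : 0 ≤ v) (hfix : M *ᵥ v = v) (hcol : ∀ j, v j ≠ 0 → ∑ i, M i j = 1) :
    v = 0 := by
  by_contra hne
  obtain ⟨j₀, hj₀⟩ := Function.ne_iff.mp hne
  set J := univ.filter (v · ≠ 0)
  refine hME J ⟨j₀, by simpa [J] using hj₀⟩ fun j hj => ?_
  have hvj : v j ≠ 0 := (mem_filter.mp hj).2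
  -- a row `i` outside the support has `(M v) i = v i = 0`, a sum of nonnegative terms
  have hout : ∀ i ∉ J, M i j = 0 := fun i hi => by
    have hvi : v i = 0 := by simpa [J] using hi
    have hrow : ∑ k, M i k * v k = 0 := (congrFun hfix i).trans hvi
    have := (sum_eq_zero_iff_of_nonneg fun k _ => mul_nonneg (hM i k) (hv k)).mp hrow j
      (mem_univ j)
    exact (mul_eq_zero.mp this).resolve_right hvj
  rw [← hcol j hvj, ← sum_add_sum_compl J, sum_eq_zero fun i hi => hout i (mem_compl.mp hi),
    add_zero]

namespace Substoch

theorem eq_zero_of_le_mulVec (hM : Substoch M) (hME : Elsinger M) {v : Fin n → ℝ} (hv : 0 ≤ v)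
    (hle : v ≤ M *ᵥ v) : v = 0 := by
  have hcol_le : ∀ j, (∑ i, M i j) * v j ≤ v j := fun j => mul_le_of_le_one_left (hv j) (hM.2 j)
  have hswap : ∑ i, (M *ᵥ v) i = ∑ j, (∑ i, M i j) * v j := by
    simp only [mulVec, dotProduct, sum_mul]
    exact sum_comm
  -- `∑ v ≤ ∑ M v = ∑_j (column sum j) * v j ≤ ∑ v`, so both inequalities are termwise equalities
  have hsum : ∑ i, v i = ∑ i, (M *ᵥ v) i :=
    le_antisymm (sum_le_sum fun i _ => hle i) (hswap ▸ sum_le_sum fun j _ => hcol_le j)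
  have hfix : M *ᵥ v = v :=
    funext fun i => ((sum_eq_sum_iff_of_le fun i _ => hle i).mp hsum i (mem_univ i)).symm
  have hcol : ∀ j, v j ≠ 0 → ∑ i, M i j = 1 := fun j hvj => by
    have htight := (sum_eq_sum_iff_of_le fun j _ => hcol_le j).mp (hswap ▸ hsum.symm) j
      (mem_univ j)
    exact mul_right_cancel₀ hvj (htight.trans (one_mul _).symm)
  exact hME.eq_zero_of_mulVec_eq hM.1 hv hfix hcol

theorem nonneg_of_mulVec_le (hM : Substoch M) (hME : Elsinger M) {y : Fin n → ℝ}
    (hy : M *ᵥ y ≤ y) : 0 ≤ y := by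
  have hneg : y⁻ ≤ M *ᵥ y⁻ := fun i => by
    rcases le_or_gt 0 (y i) with hyi | hyi
    · simpa [negPart_eq_zero.mpr hyi] using mulVec_nonneg_of_nonneg hM.1 (negPart_nonneg y) i
    · calc y⁻ i = -y i := by simp [negPart_eq_neg.mpr hyi.le]
        _ ≤ (M *ᵥ -y) i := by rw [mulVec_neg, Pi.neg_apply]; exact neg_le_neg (hy i)
        _ ≤ (M *ᵥ y⁻) i := mulVec_mono_of_nonneg hM.1 (neg_le_negPart y) i
  exact negPart_eq_zero.mp (hM.eq_zero_of_le_mulVec hME (negPart_nonneg y) hneg)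

theorem isUnit_one_sub (hM : Substoch M) (hME : Elsinger M) : IsUnit (1 - M) := by
  refine mulVec_injective_iff_isUnit.mp fun v w hvw => ?_
  have hfix : M *ᵥ (v - w) = v - w := by
    rw [← sub_eq_zero, ← mulVec_sub, sub_mulVec, one_mulVec, sub_eq_zero] at hvw
    exact hvw.symm
  have hpos := hM.nonneg_of_mulVec_le hME hfix.le
  have hneg := hM.nonneg_of_mulVec_le hME (by rw [mulVec_neg, hfix] : M *ᵥ -(v - w) ≤ -(v - w))
  exact sub_eq_zero.mp (le_antisymm (neg_nonneg.mp hneg) hpos)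

theorem eq_inv_mulVec_iff (hM : Substoch M) (hME : Elsinger M) {a r : Fin n → ℝ} :
    r = (1 - M)⁻¹ *ᵥ a ↔ r = a + M *ᵥ r := by
  have hdet : IsUnit (1 - M).det := (isUnit_iff_isUnit_det _).mp (hM.isUnit_one_sub hME)
  calc r = (1 - M)⁻¹ *ᵥ a ↔ (1 - M) *ᵥ r = a :=
        ⟨fun h => by rw [h, mulVec_mulVec, mul_nonsing_inv _ hdet, one_mulVec],
          fun h => by rw [← h, mulVec_mulVec, nonsing_inv_mul _ hdet, one_mulVec]⟩
    _ ↔ r = a + M *ᵥ r := by rw [sub_mulVec, one_mulVec, sub_eq_iff_eq_add]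

theorem le_of_le_add_mulVec (hM : Substoch M) (hME : Elsinger M) {a r d : Fin n → ℝ}
    (hr : r ≤ a + M *ᵥ r) (hd : a + M *ᵥ d ≤ d) : r ≤ d := by
  have hsuper : M *ᵥ (d - r) ≤ d - r := fun i => by
    have := hr i
    have := hd i
    simp only [mulVec_sub, Pi.add_apply, Pi.sub_apply] at *
    linarith
  exact sub_nonneg.mp (hM.nonneg_of_mulVec_le hME hsuper)

end Substoch

theorem Phi_eq_of_le {n : ℕ} {a d : Fin n → ℝ} {Md Ms : Matrix (Fin n) (Fin n) ℝ}
    {R : (Fin n → ℝ) × (Fin n → ℝ)} (h : a + Md *ᵥ R.1 + Ms *ᵥ R.2 ≤ d) :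
    Phi a d Md Ms R = (a + Md *ᵥ R.1 + Ms *ᵥ R.2, 0) := by
  ext i
  · exact min_eq_right (h i)
  · exact max_eq_right (sub_nonpos.mpr (h i))

theorem all_default_fixed_point_general {n : ℕ} (a d : Fin n → ℝ)
    (Md Ms : Matrix (Fin n) (Fin n) ℝ)
    (hMd : Substoch Md) (hMs : Substoch Ms)
    (hMdE : Elsinger Md) (hMsE : Elsinger Ms)
    (sd : Fin n → ℝ) (hsd0 : ∀ i, 0 ≤ sd i)
    (halldef : ∀ i, a i + Md.mulVec d i + Ms.mulVec sd i < d i) :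
    Phi a d Md Ms ((1 - Md)⁻¹.mulVec a, 0) = ((1 - Md)⁻¹.mulVec a, 0) ∧
    (∀ R : (Fin n → ℝ) × (Fin n → ℝ), 0 ≤ R → Phi a d Md Ms R = R →
      R = ((1 - Md)⁻¹.mulVec a, 0)) := by
  have hbelow : ∀ r ≤ d, ∀ i, a i + (Md *ᵥ r) i ≤ d i := fun r hr i => by
    have hsd : 0 ≤ (Ms *ᵥ sd) i := mulVec_nonneg_of_nonneg hMs.1 hsd0 i
    linarith [mulVec_mono_of_nonneg hMd.1 hr i, halldef i]
  set x := (1 - Md)⁻¹ *ᵥ a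
  have hx : x = a + Md *ᵥ x := (hMd.eq_inv_mulVec_iff hMdE).mp rfl
  refine ⟨?_, fun ⟨r, s⟩ ⟨_, (hs0 : 0 ≤ s)⟩ hfix => ?_⟩
  · have hxd : x ≤ d := hMd.le_of_le_add_mulVec hMdE hx.le (hbelow d le_rfl)
    rw [Phi_eq_of_le fun i => by simpa using hbelow x hxd i, mulVec_zero, add_zero, ← hx]
  have hfix_r : ∀ i, min (d i) (a i + (Md *ᵥ r) i + (Ms *ᵥ s) i) = r i :=
    congrFun (congrArg Prod.fst hfix)
  have hfix_s : ∀ i, max (a i + (Md *ᵥ r) i + (Ms *ᵥ s) i - d i) 0 = s i :=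
    congrFun (congrArg Prod.snd hfix)
  have hrd : r ≤ d := fun i => hfix_r i ▸ min_le_left _ _
  have hs : s = 0 := hMs.eq_zero_of_le_mulVec hMsE hs0 fun i =>
    hfix_s i ▸ max_le (by linarith [hbelow r hrd i]) (mulVec_nonneg_of_nonneg hMs.1 hs0 i)
  subst hs
  rw [Phi_eq_of_le fun i => by simpa using hbelow r hrd i, mulVec_zero, add_zero,
    Prod.mk.injEq] at hfix
  rw [(hMd.eq_inv_mulVec_iff hMdE).mpr hfix.1.symm]

/-- If all firms default even under full debt payments, i.e.
`a + M^d d + M^s s(d) < d` componentwise, then the unique fixed point of `Φ` is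
`((I − M^d)⁻¹ a, 0)`. -/
theorem all_default_fixed_point {n : ℕ} (a d : Fin n → ℝ)
    (ha : ∀ i, 0 ≤ a i) (hd : ∀ i, 0 ≤ d i)
    (Md Ms : Matrix (Fin n) (Fin n) ℝ)
    (hMd : Substoch Md) (hMs : Substoch Ms)
    (hMdE : Elsinger Md) (hMsE : Elsinger Ms)
    (sd : Fin n → ℝ) (hsd0 : ∀ i, 0 ≤ sd i)
    (hsdfix : sd = fun i => max (a i + Md.mulVec d i + Ms.mulVec sd i - d i) 0)
    (halldef : ∀ i, a i + Md.mulVec d i + Ms.mulVec sd i < d i) :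
    Phi a d Md Ms ((1 - Md)⁻¹.mulVec a, 0) = ((1 - Md)⁻¹.mulVec a, 0) ∧
    (∀ R : (Fin n → ℝ) × (Fin n → ℝ), 0 ≤ R → Phi a d Md Ms R = R →
      R = ((1 - Md)⁻¹.mulVec a, 0)) :=
  all_default_fixed_point_general a d Md Ms hMd hMs hMdE hMsE sd hsd0 halldef
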